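/- arXiv:2409.05761 — 3 statements merged into one kernel-verified Lean document; each statement's English description precedes it below -/
import Mathlib

section
/- (Rankin's trick) For all real x ≥ 1, y ≥ 2, and every σ > 0, the number Ψ(x,y) of y-smooth integers n ≤ x satisfies Ψ(x,y) ≤ x^σ · ∏_{p ≤ y} (1 - p^{-σ})^{-1}. -/
open Finset Classical

noncomputable def Nat.rpowMonoidHom (s : ℝ) : ℕ →* ℝ where
  toFun n := (n : ℝ) ^ s
  map_one' := by simp
  map_mul' m n := by
    push_cast
    exact Real.mul_rpow (Nat.cast_nonneg m) (Nat.cast_nonneg n)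

theorem Nat.rpowMonoidHom_apply (s : ℝ) (n : ℕ) : Nat.rpowMonoidHom s n = (n : ℝ) ^ s := rfl

theorem Nat.mem_smoothNumbers_floor_add_one {y : ℝ} {n : ℕ}
    (h : ∀ p : ℕ, p.Prime → p ∣ n → (p : ℝ) ≤ y) : n ∈ (⌊y⌋₊ + 1).smoothNumbers :=
  Nat.mem_smoothNumbers'.2 fun p hp hpn => Nat.lt_succ_of_le (Nat.le_floor (h p hp hpn))

theorem Nat.filter_prime_Iic_eq_primesBelow (n : ℕ) :
    (Iic n).filter Nat.Prime = (n + 1).primesBelow := by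
  rw [Nat.primesBelow, Nat.range_succ_eq_Iic]

/-- The left side is a partial sum of the nonnegative series in the Euler product
`∑_{n ∈ N.smoothNumbers} f n = ∏_{p < N} (1 - f p)⁻¹`. -/
theorem sum_le_prod_primesBelow_of_subset_smoothNumbers {f : ℕ →* ℝ} (hf_nonneg : ∀ n, 0 ≤ f n)
    (hf_lt_one : ∀ {p : ℕ}, p.Prime → f p < 1) {N : ℕ} {S : Finset ℕ}
    (hS : ∀ n ∈ S, n ∈ N.smoothNumbers) :
    ∑ n ∈ S, f n ≤ ∏ p ∈ N.primesBelow, (1 - f p)⁻¹ := by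
  have hf_norm : ∀ {p : ℕ}, p.Prime → ‖f p‖ < 1 := fun hp => by
    rw [Real.norm_of_nonneg (hf_nonneg _)]
    exact hf_lt_one hp
  have hasSum := (EulerProduct.summable_and_hasSum_smoothNumbers_prod_primesBelow_geometric
    hf_norm N).2
  rw [← sum_subtype_of_mem f hS]
  exact sum_le_hasSum _ (fun m _ => hf_nonneg m) hasSum

/-- Rankin's trick: `1 ≤ (x / n) ^ σ` for every `n ≤ x`. -/
theorem card_le_rpow_mul_sum_rpow_neg {x σ : ℝ} (hσ : 0 ≤ σ) {S : Finset ℕ}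
    (hS : ∀ n ∈ S, 1 ≤ n ∧ (n : ℝ) ≤ x) :
    (#S : ℝ) ≤ x ^ σ * ∑ n ∈ S, (n : ℝ) ^ (-σ) := by
  rw [mul_sum, card_eq_sum_ones, Nat.cast_sum]
  refine sum_le_sum fun n hn => ?_
  obtain ⟨hn_one, hnx⟩ := hS n hn
  have hn_pos : (0 : ℝ) < n := by exact_mod_cast hn_one
  rw [Nat.cast_one, Real.rpow_neg hn_pos.le, ← div_eq_mul_inv,
    one_le_div (Real.rpow_pos_of_pos hn_pos σ)]
  exact Real.rpow_le_rpow hn_pos.le hnx hσ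

theorem rankin_trick_general (x y σ : ℝ) (hx : 1 ≤ x) (hσ : 0 < σ) :
    (((Finset.Icc 1 ⌊x⌋₊).filter
        (fun n => ∀ p : ℕ, p.Prime → p ∣ n → (p : ℝ) ≤ y)).card : ℝ) ≤
      x ^ σ * ∏ p ∈ (Finset.Iic ⌊y⌋₊).filter Nat.Prime, (1 - (p : ℝ) ^ (-σ))⁻¹ := by
  set S := (Icc 1 ⌊x⌋₊).filter fun n => ∀ p : ℕ, p.Prime → p ∣ n → (p : ℝ) ≤ y
  have hS_Icc : ∀ n ∈ S, 1 ≤ n ∧ (n : ℝ) ≤ x := fun n hn => by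
    obtain ⟨hn1, hnx⟩ := mem_Icc.1 (mem_filter.1 hn).1
    exact ⟨hn1, (Nat.le_floor_iff' (by omega)).1 hnx⟩
  have hS_smooth : ∀ n ∈ S, n ∈ (⌊y⌋₊ + 1).smoothNumbers := fun n hn =>
    Nat.mem_smoothNumbers_floor_add_one (mem_filter.1 hn).2
  have hEuler := sum_le_prod_primesBelow_of_subset_smoothNumbers (f := Nat.rpowMonoidHom (-σ))
    (fun n => Real.rpow_nonneg n.cast_nonneg _)
    (fun hp => Real.rpow_lt_one_of_one_lt_of_neg (by exact_mod_cast hp.one_lt) (neg_neg_of_pos hσ))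
    hS_smooth
  simp only [Nat.rpowMonoidHom_apply] at hEuler
  rw [Nat.filter_prime_Iic_eq_primesBelow]
  calc (#S : ℝ) ≤ x ^ σ * ∑ n ∈ S, (n : ℝ) ^ (-σ) := card_le_rpow_mul_sum_rpow_neg hσ.le hS_Icc
    _ ≤ _ := mul_le_mul_of_nonneg_left hEuler (Real.rpow_nonneg (by linarith) σ)

/-- Rankin's trick: for all real `x ≥ 1`, `y ≥ 2` and every `σ > 0`, the number `Ψ(x,y)` of
`y`-smooth integers `n ≤ x` satisfies `Ψ(x,y) ≤ x^σ · ∏_{p ≤ y} (1 - p^{-σ})⁻¹`. -/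
theorem rankin_trick (x y σ : ℝ) (hx : 1 ≤ x) (hy : 2 ≤ y) (hσ : 0 < σ) :
    (((Finset.Icc 1 ⌊x⌋₊).filter
        (fun n => ∀ p : ℕ, p.Prime → p ∣ n → (p : ℝ) ≤ y)).card : ℝ) ≤
      x ^ σ * ∏ p ∈ (Finset.Iic ⌊y⌋₊).filter Nat.Prime, (1 - (p : ℝ) ^ (-σ))⁻¹ :=
  rankin_trick_general x y σ hx hσ
end

section
/- For y ≥ 2 and x ≥ y, one has ∑ 1/(p_1 ⋯ p_{k-1} m) ≤ C_{δ'} log x, where the sum ranges over all k ≥ 1, distinct primes p_1, …, p_{k-1} > y, and positive integers m with p_1⋯p_{k-1} m ≤ x/y, provided y ≥ x^{δ'} for some fixed δ' > 0; here C_{δ'} depends only on δ'. -/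
/-!
Every summand equals `1/r` for `r = p₁⋯p_{k-1} m ≤ x/y`, and the term `1/r` occurs at most
`2^K` times: the set `{p₁, …, p_{k-1}}` consists of prime factors of `r` exceeding
`y ≥ x^{δ'}`, and there are at most `K = ⌈1/δ'⌉` of those since their product divides `r ≤ x`.
The sum is therefore at most `2^K` times the harmonic sum up to `x/y`, which is `O(log x)`.
-/

open Finset

lemma Finset.sum_comp_le_mul_sum {ι κ R : Type*} [DecidableEq κ] [CommSemiring R] [PartialOrder R]
    [IsOrderedRing R] {s : Finset ι} {t : Finset κ} {f : ι → κ} {g : κ → R}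
    (hf : ∀ i ∈ s, f i ∈ t) (hg : ∀ k ∈ t, 0 ≤ g k) {B : ℕ}
    (hB : ∀ k ∈ t, #{i ∈ s | f i = k} ≤ B) :
    ∑ i ∈ s, g (f i) ≤ B * ∑ k ∈ t, g k := by
  rw [← sum_fiberwise_of_maps_to hf, mul_sum]
  refine sum_le_sum fun k hk => ?_
  calc ∑ i ∈ s with f i = k, g (f i) = #{i ∈ s | f i = k} * g k := by
        rw [sum_congr rfl fun i hi => by rw [(mem_filter.mp hi).2], sum_const, nsmul_eq_mul]
    _ ≤ B * g k := by gcongr; exacts [hg k hk, hB k hk]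

lemma Nat.card_le_two_pow_of_prod_mul_eq {P : ℕ → Prop} [DecidablePred P] {r : ℕ} (hr : r ≠ 0)
    (T : Finset (Finset ℕ × ℕ))
    (hT : ∀ q ∈ T, (∀ p ∈ q.1, p.Prime ∧ P p) ∧ (∏ p ∈ q.1, p) * q.2 = r) :
    #T ≤ 2 ^ #{p ∈ r.primeFactors | P p} := by
  rw [← card_powerset]
  refine card_le_card_of_injOn Prod.fst (fun q hq => ?_) fun q hq q' hq' hqq' => ?_
  · obtain ⟨hprimes, hr_eq⟩ := hT q hq
    refine mem_powerset.mpr fun p hp => mem_filter.mpr ⟨?_, (hprimes p hp).2⟩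
    refine Nat.mem_primeFactors.mpr ⟨(hprimes p hp).1, ?_, hr⟩
    exact hr_eq ▸ (dvd_prod_of_mem _ hp).mul_right _
  · have hq_eq := (hT q hq).2
    have hq'_eq := (hT q' hq').2
    have hprod : ∏ p ∈ q.1, p ≠ 0 := left_ne_zero_of_mul (hq_eq ▸ hr)
    rw [← hq'_eq, hqq'] at hq_eq
    exact Prod.ext hqq' (Nat.eq_of_mul_eq_mul_left (Nat.pos_of_ne_zero (hqq' ▸ hprod)) hq_eq)

lemma Nat.pow_card_le_of_subset_primeFactors {y : ℝ} (hy : 0 ≤ y) {r : ℕ} (hr : r ≠ 0)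
    {S : Finset ℕ} (hS : S ⊆ r.primeFactors) (hyS : ∀ p ∈ S, y ≤ p) :
    y ^ #S ≤ r := by
  have hdvd : ∏ p ∈ S, p ∣ r :=
    (prod_dvd_prod_of_subset _ _ _ hS).trans (Nat.prod_primeFactors_dvd r)
  calc y ^ #S = ∏ _p ∈ S, y := (prod_const y).symm
    _ ≤ ∏ p ∈ S, (p : ℝ) := prod_le_prod (fun _ _ => hy) hyS
    _ = ((∏ p ∈ S, p : ℕ) : ℝ) := by push_cast; rfl
    _ ≤ r := by exact_mod_cast Nat.le_of_dvd (Nat.pos_of_ne_zero hr) hdvd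

lemma Real.natCast_le_inv_of_rpow_pow_le {x δ : ℝ} (hx : 1 < x) (hδ : 0 < δ) {k : ℕ}
    (h : (x ^ δ) ^ k ≤ x) : (k : ℝ) ≤ δ⁻¹ := by
  rw [← Real.rpow_natCast, ← Real.rpow_mul (by linarith)] at h
  have hδk : δ * k ≤ 1 := (Real.rpow_le_rpow_left_iff hx).mp (by rwa [Real.rpow_one])
  rwa [← one_div, le_div_iff₀' hδ]

lemma Nat.card_primeFactors_gt_le {x y δ : ℝ} (hx : 1 < x) (hδ : 0 < δ) (hxy : x ^ δ ≤ y)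
    {r : ℕ} (hr : r ≠ 0) (hrx : (r : ℝ) ≤ x) :
    #{p ∈ r.primeFactors | y < (p : ℕ)} ≤ ⌈δ⁻¹⌉₊ := by
  have hy : 0 ≤ y := (Real.rpow_nonneg (by linarith) δ).trans hxy
  have hpow : (x ^ δ) ^ #{p ∈ r.primeFactors | y < (p : ℕ)} ≤ x := calc
    _ ≤ y ^ #{p ∈ r.primeFactors | y < (p : ℕ)} := by gcongr
    _ ≤ r := Nat.pow_card_le_of_subset_primeFactors hy hr (filter_subset _ _)
        fun p hp => (mem_filter.mp hp).2.le
    _ ≤ x := hrx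
  exact_mod_cast (Real.natCast_le_inv_of_rpow_pow_le hx hδ hpow).trans (Nat.le_ceil _)

lemma Nat.card_factorizations_le {x y δ : ℝ} (hx : 1 < x) (hδ : 0 < δ) (hxy : x ^ δ ≤ y)
    {r : ℕ} (hr : r ≠ 0) (hrx : (r : ℝ) ≤ x) (T : Finset (Finset ℕ × ℕ))
    (hT : ∀ q ∈ T, (∀ p ∈ q.1, p.Prime ∧ y < p) ∧ (∏ p ∈ q.1, p) * q.2 = r) :
    #T ≤ 2 ^ ⌈δ⁻¹⌉₊ :=
  (Nat.card_le_two_pow_of_prod_mul_eq hr T hT).trans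
    (Nat.pow_le_pow_right two_pos (Nat.card_primeFactors_gt_le hx hδ hxy hr hrx))

lemma Real.sum_Icc_one_div_le_one_add_log {z : ℝ} (hz : 1 ≤ z) :
    ∑ r ∈ Icc 1 ⌊z⌋₊, 1 / (r : ℝ) ≤ 1 + Real.log z := by
  calc ∑ r ∈ Icc 1 ⌊z⌋₊, 1 / (r : ℝ) = ((harmonic ⌊z⌋₊ : ℚ) : ℝ) := by
        simp [harmonic_eq_sum_Icc]
    _ ≤ 1 + Real.log z := harmonic_floor_le_one_add_log z hz

lemma Real.one_add_log_le_mul_log {x : ℝ} (hx : 2 ≤ x) :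
    1 + Real.log x ≤ ((Real.log 2)⁻¹ + 1) * Real.log x := by
  have hlog2 : 0 < Real.log 2 := Real.log_pos one_lt_two
  have hlog : Real.log 2 ≤ Real.log x := Real.log_le_log two_pos hx
  rw [add_mul, one_mul, add_le_add_iff_right, inv_mul_eq_div, le_div_iff₀ hlog2, one_mul]
  exact hlog

lemma Nat.prime_and_lt_of_mem_filter_floor_lt {y : ℝ} (hy : 0 ≤ y) {n p : ℕ}
    (hp : p ∈ ((range n).filter Nat.Prime).filter (fun p => ⌊y⌋₊ < p)) :
    p.Prime ∧ y < p := by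
  obtain ⟨hp_mem, hp_gt⟩ := mem_filter.mp hp
  exact ⟨(mem_filter.mp hp_mem).2, (Nat.floor_lt hy).mp hp_gt⟩

/-- If `y ≥ x^{δ'}`, `2 ≤ y ≤ x`, then the sum of `1/(p₁⋯p_{k-1} m)` over all sets of
distinct primes `p_i > y` and positive integers `m` with `p₁⋯p_{k-1} m ≤ x/y` is at most
`C_{δ'} log x`, where `C_{δ'}` depends only on `δ'`. -/
theorem harmonic_sum_over_factorizations (δ' : ℝ) (hδ' : 0 < δ') :
    ∃ C : ℝ, 0 < C ∧ ∀ (x y : ℝ), 2 ≤ y → y ≤ x → x ^ δ' ≤ y →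
      (∑ q ∈ ((((Finset.range (⌊x⌋₊ + 1)).filter Nat.Prime).filter
            (fun p => ⌊y⌋₊ < p)).powerset ×ˢ Finset.Icc 1 ⌊x / y⌋₊).filter
          (fun q => (((∏ p ∈ q.1, p) * q.2 : ℕ) : ℝ) ≤ x / y),
        (1 : ℝ) / (((∏ p ∈ q.1, p) * q.2 : ℕ) : ℝ)) ≤ C * Real.log x := by
  refine ⟨2 ^ ⌈δ'⁻¹⌉₊ * ((Real.log 2)⁻¹ + 1), by positivity, fun x y hy hyx hxy => ?_⟩
  have hy0 : 0 < y := by linarith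
  have hx0 : 0 < x := by linarith
  have hxy_le : x / y ≤ x := div_le_self (by linarith) (by linarith)
  calc _ ≤ ((2 ^ ⌈δ'⁻¹⌉₊ : ℕ) : ℝ) * ∑ r ∈ Icc 1 ⌊x / y⌋₊, 1 / (r : ℝ) := by
        refine sum_comp_le_mul_sum (f := fun q : Finset ℕ × ℕ => (∏ p ∈ q.1, p) * q.2)
          (g := fun r : ℕ => 1 / (r : ℝ)) (fun q hq => ?_) (fun _ _ => by positivity)
          fun r hr => ?_
        · simp only [mem_filter, mem_product, mem_powerset, mem_Icc] at hq
          obtain ⟨⟨hsub, hm, -⟩, hle⟩ := hq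
          have hprod : 0 < ∏ p ∈ q.1, p := prod_pos fun p hp =>
            (Nat.prime_and_lt_of_mem_filter_floor_lt hy0.le (hsub hp)).1.pos
          exact mem_Icc.mpr ⟨Nat.mul_pos hprod hm, Nat.le_floor hle⟩
        · have hr0 : r ≠ 0 := Nat.one_le_iff_ne_zero.mp (mem_Icc.mp hr).1
          have hrx : (r : ℝ) ≤ x :=
            ((Nat.cast_le.mpr (mem_Icc.mp hr).2).trans (Nat.floor_le (by positivity))).trans hxy_le
          refine Nat.card_factorizations_le (by linarith) hδ' hxy hr0 hrx _ fun q hq => ?_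
          simp only [mem_filter, mem_product, mem_powerset] at hq
          exact ⟨fun p hp => Nat.prime_and_lt_of_mem_filter_floor_lt hy0.le (hq.1.1.1 hp), hq.2⟩
    _ ≤ 2 ^ ⌈δ'⁻¹⌉₊ * (1 + Real.log x) := by
        push_cast
        gcongr
        calc _ ≤ 1 + Real.log (x / y) :=
              Real.sum_Icc_one_div_le_one_add_log ((one_le_div hy0).mpr hyx)
          _ ≤ 1 + Real.log x := by gcongr
    _ ≤ _ := by rw [mul_assoc]; gcongr; exact Real.one_add_log_le_mul_log (hy.trans hyx)
end

section
/- Let x, h be reals with 2 ≤ h ≤ x, and let s ∈ ℂ with Re(s) ≤ 10 and s ≠ 0. Then ((x+h)^s − x^s)/s = x^s (h/x + O(|s−1| h²/x²)), where the implied constant is absolute. Moreover |((x+h)^s − x^s)/s| ≤ C |x^s| h/x for an absolute constant C. -/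
/-!
Writing `((x+h)^s - x^s)/s = ∫_x^{x+h} u^(s-1) du` and using `‖u^w‖ ≤ 2^9 ‖x^w‖` for
`x ≤ u ≤ 2x`, `Re w ≤ 9`, bounds the quotient by `2^9 ‖x^s‖ h / x`. Subtracting the main term
`x^s h / x = ∫_x^{x+h} x^(s-1) du` leaves the integrand `u^(s-1) - x^(s-1)`, which is the
same difference one exponent lower, so the first bound applied to `s - 1` gives the factor
`‖s - 1‖ h / x`.
-/

open Complex

lemma norm_ofReal_cpow_le_two_rpow_mul {x u T : ℝ} {w : ℂ} (hx : 0 < x) (hxu : x ≤ u)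
    (hu : u ≤ 2 * x) (hT : 0 ≤ T) (hw : w.re ≤ T) :
    ‖(u : ℂ) ^ w‖ ≤ 2 ^ T * ‖(x : ℂ) ^ w‖ := by
  rw [norm_cpow_eq_rpow_re_of_pos (hx.trans_le hxu), norm_cpow_eq_rpow_re_of_pos hx]
  rcases le_or_gt w.re 0 with hw0 | hw0
  · calc u ^ w.re ≤ x ^ w.re := Real.rpow_le_rpow_of_nonpos hx hxu hw0
      _ ≤ 2 ^ T * x ^ w.re :=
        le_mul_of_one_le_left (by positivity) (Real.one_le_rpow one_le_two hT)
  · calc u ^ w.re ≤ (2 * x) ^ w.re := Real.rpow_le_rpow (hx.le.trans hxu) hu hw0.le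
      _ = 2 ^ w.re * x ^ w.re := Real.mul_rpow zero_le_two hx.le
      _ ≤ 2 ^ T * x ^ w.re := by gcongr; exact one_le_two

lemma norm_ofReal_cpow_sub_one {x : ℝ} (hx : 0 < x) (s : ℂ) :
    ‖(x : ℂ) ^ (s - 1)‖ = ‖(x : ℂ) ^ s‖ / x := by
  rw [cpow_sub _ _ (ofReal_ne_zero.2 hx.ne'), cpow_one, norm_div, norm_real,
    Real.norm_of_nonneg hx.le]

lemma cpow_sub_cpow_div_eq_integral {a b : ℝ} {s : ℂ} (ha : 0 < a) (hb : 0 < b) (hs : s ≠ 0) :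
    ((b : ℂ) ^ s - (a : ℂ) ^ s) / s = ∫ u in a..b, (u : ℂ) ^ (s - 1) := by
  have hzero : (0 : ℝ) ∉ Set.uIcc a b := by
    rw [Set.mem_uIcc]; rintro (⟨h, -⟩ | ⟨h, -⟩) <;> linarith
  rw [integral_cpow (Or.inr ⟨fun h => hs (by linear_combination h), hzero⟩), sub_add_cancel]

lemma norm_cpow_add_sub_cpow_le {x h T : ℝ} {s : ℂ} (hx : 0 < x) (hh : 0 ≤ h) (hhx : h ≤ x)
    (hT : 0 ≤ T) (hs : s.re - 1 ≤ T) :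
    ‖((x + h : ℝ) : ℂ) ^ s - (x : ℂ) ^ s‖ ≤ 2 ^ T * ‖(x : ℂ) ^ s‖ * ‖s‖ * h / x := by
  rcases eq_or_ne s 0 with rfl | hs0
  · simp
  have hbound :
      ∀ u ∈ Set.uIoc x (x + h), ‖(u : ℂ) ^ (s - 1)‖ ≤ 2 ^ T * (‖(x : ℂ) ^ s‖ / x) := by
    intro u hu
    rw [Set.uIoc_of_le (by linarith)] at hu
    rw [← norm_ofReal_cpow_sub_one hx]
    exact norm_ofReal_cpow_le_two_rpow_mul hx hu.1.le (by linarith [hu.2]) hT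
      (by simp only [sub_re, one_re]; linarith)
  calc ‖((x + h : ℝ) : ℂ) ^ s - (x : ℂ) ^ s‖
      = ‖s‖ * ‖∫ u in x..x + h, (u : ℂ) ^ (s - 1)‖ := by
        rw [← cpow_sub_cpow_div_eq_integral hx (by linarith) hs0, norm_div,
          mul_div_cancel₀ _ (norm_ne_zero_iff.2 hs0)]
    _ ≤ ‖s‖ * (2 ^ T * (‖(x : ℂ) ^ s‖ / x) * |x + h - x|) := by
        gcongr
        exact intervalIntegral.norm_integral_le_of_norm_le_const hbound
    _ = 2 ^ T * ‖(x : ℂ) ^ s‖ * ‖s‖ * h / x := by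
        rw [add_sub_cancel_left, abs_of_nonneg hh]; ring

lemma norm_cpow_add_sub_cpow_div_sub_le {x h T : ℝ} {s : ℂ} (hx : 0 < x) (hh : 0 ≤ h)
    (hhx : h ≤ x) (hT : 0 ≤ T) (hs0 : s ≠ 0) (hs : s.re - 2 ≤ T) :
    ‖(((x + h : ℝ) : ℂ) ^ s - (x : ℂ) ^ s) / s - (x : ℂ) ^ s * (h / x)‖ ≤
      2 ^ T * ‖(x : ℂ) ^ s‖ * ‖s - 1‖ * h ^ 2 / x ^ 2 := by
  have hx0 : (x : ℂ) ≠ 0 := ofReal_ne_zero.2 hx.ne'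
  have hmain : (x : ℂ) ^ s * (h / x) = ∫ _ in x..x + h, (x : ℂ) ^ (s - 1) := by
    rw [intervalIntegral.integral_const, cpow_sub _ _ hx0, cpow_one, add_sub_cancel_left,
      real_smul]
    ring
  have hcont : IntervalIntegrable (fun u : ℝ => (u : ℂ) ^ (s - 1)) MeasureTheory.volume x (x + h) :=
    ContinuousOn.intervalIntegrable fun u hu =>
      (continuousAt_ofReal_cpow_const u (s - 1) (Or.inr (hx.trans_le
        (by rw [Set.uIcc_of_le (by linarith)] at hu; exact hu.1)).ne')).continuousWithinAt
  have hbound : ∀ u ∈ Set.uIoc x (x + h), ‖(u : ℂ) ^ (s - 1) - (x : ℂ) ^ (s - 1)‖ ≤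
      2 ^ T * ‖(x : ℂ) ^ s‖ * ‖s - 1‖ * h / x ^ 2 := by
    intro u hu
    rw [Set.uIoc_of_le (by linarith)] at hu
    have hdiff := norm_cpow_add_sub_cpow_le hx (sub_nonneg.2 hu.1.le) (by linarith [hu.2]) hT
      (s := s - 1) (by simp only [sub_re, one_re]; linarith)
    rw [add_sub_cancel, norm_ofReal_cpow_sub_one hx] at hdiff
    calc _ ≤ 2 ^ T * (‖(x : ℂ) ^ s‖ / x) * ‖s - 1‖ * (u - x) / x := hdiff
      _ ≤ 2 ^ T * (‖(x : ℂ) ^ s‖ / x) * ‖s - 1‖ * h / x := by gcongr; linarith [hu.2]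
      _ = 2 ^ T * ‖(x : ℂ) ^ s‖ * ‖s - 1‖ * h / x ^ 2 := by ring
  calc ‖(((x + h : ℝ) : ℂ) ^ s - (x : ℂ) ^ s) / s - (x : ℂ) ^ s * (h / x)‖
      = ‖∫ u in x..x + h, ((u : ℂ) ^ (s - 1) - (x : ℂ) ^ (s - 1))‖ := by
        rw [cpow_sub_cpow_div_eq_integral hx (by linarith) hs0, hmain,
          intervalIntegral.integral_sub hcont intervalIntegrable_const]
    _ ≤ 2 ^ T * ‖(x : ℂ) ^ s‖ * ‖s - 1‖ * h / x ^ 2 * |x + h - x| :=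
        intervalIntegral.norm_integral_le_of_norm_le_const hbound
    _ = 2 ^ T * ‖(x : ℂ) ^ s‖ * ‖s - 1‖ * h ^ 2 / x ^ 2 := by
        rw [add_sub_cancel_left, abs_of_nonneg hh]; ring

/-- For `2 ≤ h ≤ x` and `s ∈ ℂ` with `Re(s) ≤ 10`, `s ≠ 0`:
`((x+h)^s − x^s)/s = x^s (h/x + O(|s−1| h²/x²))` and `|((x+h)^s − x^s)/s| ≤ C|x^s| h/x`,
with absolute implied constants. -/
theorem short_interval_taylor :
    ∃ C : ℝ, 0 < C ∧ ∀ (x h : ℝ) (s : ℂ), 2 ≤ h → h ≤ x → s.re ≤ 10 → s ≠ 0 →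
      Norm.norm ((((x + h : ℝ) : ℂ) ^ s - ((x : ℝ) : ℂ) ^ s) / s -
          ((x : ℝ) : ℂ) ^ s * ((h : ℝ) / x)) ≤
        C * Norm.norm (((x : ℝ) : ℂ) ^ s) * Norm.norm (s - 1) * h ^ 2 / x ^ 2 ∧
      Norm.norm ((((x + h : ℝ) : ℂ) ^ s - ((x : ℝ) : ℂ) ^ s) / s) ≤
        C * Norm.norm (((x : ℝ) : ℂ) ^ s) * h / x := by
  refine ⟨2 ^ (9 : ℝ), by positivity, fun x h s h2 hhx hre hs => ⟨?_, ?_⟩⟩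
  · exact norm_cpow_add_sub_cpow_div_sub_le (by linarith) (by linarith) hhx (T := 9)
      (by norm_num) hs (by linarith)
  · rw [norm_div, div_le_iff₀ (norm_pos_iff.2 hs)]
    refine (norm_cpow_add_sub_cpow_le (by linarith) (by linarith) hhx (T := 9) (by norm_num)
      (by linarith)).trans_eq ?_
    ring
end
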